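/- If in the Frank–Wolfe algorithm the initialization x(t_0) = 0 is replaced by an arbitrary starting point x₀ ∈ argmin_{x ∈ P} ‖x‖_∞ (dropping the assumptions 0 ∈ P and F(0) = 0), then every coordinate i ∈ {1,…,n} and every j ∈ {0,1,…,T} satisfy 1 − x_i(t_j) ≥ e^{−t_j/(1+t_j)}·(1 − x_i(t_0)), and consequently F(x(t_j) ∨ x*) ≥ e^{−t_j/(1+t_j)}·(1 − ‖x₀‖_∞)·F(x*). -/

import Mathlib

/-- The harmonic number `H j = ∑_{k=1}^j 1/k` (with `H 0 = 0`). -/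
noncomputable def harmonicNum (j : ℕ) : ℝ := ∑ k ∈ Finset.range j, (1 : ℝ) / (k + 1)

/-- `H_{2,j} = ∑_{k=1}^j 1/k²`. -/
noncomputable def harmonicNum2 (j : ℕ) : ℝ := ∑ k ∈ Finset.range j, (1 : ℝ) / ((k : ℝ) + 1) ^ 2

/-- The time values `t_j = 1/(1 - ln(1 + H_j/H_T)) - 1` of the Frank–Wolfe algorithm. -/
noncomputable def fwTime (T j : ℕ) : ℝ :=
  1 / (1 - Real.log (1 + harmonicNum j / harmonicNum T)) - 1

/-- The Frank–Wolfe step ratio `e^{-1/(1+t_j) + 1/(1+t_{j+1})}`. -/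
noncomputable def fwRatio (T j : ℕ) : ℝ :=
  Real.exp (-(1 / (1 + fwTime T j)) + 1 / (1 + fwTime T (j + 1)))

/-- `√a_{t_j} = e^{t_j/(1+t_j)}`. -/
noncomputable def fwSqa (T j : ℕ) : ℝ := Real.exp (fwTime T j / (1 + fwTime T j))

/-- `F : [0,1]^n → ℝ` is DR-submodular: for all `x ≤ y` in `[0,1]^n`, coordinates `i` and
`a > 0` with `x + a·e_i, y + a·e_i ∈ [0,1]^n`, one has
`F(x + a·e_i) - F(x) ≥ F(y + a·e_i) - F(y)`. -/
def DRSubmodular {n : ℕ} (F : (Fin n → ℝ) → ℝ) : Prop :=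
  ∀ x y : Fin n → ℝ, x ∈ Set.Icc (0 : Fin n → ℝ) 1 → y ∈ Set.Icc (0 : Fin n → ℝ) 1 →
    x ≤ y → ∀ i : Fin n, ∀ a : ℝ, 0 < a →
      x + a • (Pi.single i 1 : Fin n → ℝ) ∈ Set.Icc (0 : Fin n → ℝ) 1 →
      y + a • (Pi.single i 1 : Fin n → ℝ) ∈ Set.Icc (0 : Fin n → ℝ) 1 →
      F (y + a • (Pi.single i 1 : Fin n → ℝ)) - F y ≤
        F (x + a • (Pi.single i 1 : Fin n → ℝ)) - F x

/-- The continuous linear map `y ↦ ⟨g, y⟩ = ∑ i, g i * y i` on `ℝⁿ`. -/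
noncomputable def gradCLM {n : ℕ} (g : Fin n → ℝ) : (Fin n → ℝ) →L[ℝ] ℝ :=
  ∑ i, g i • (ContinuousLinearMap.proj i : (Fin n → ℝ) →L[ℝ] ℝ)

/-- `gradF` is the gradient of `F` on the box `[0,1]^n`: at each point of the box, `F` is
differentiable within the box with derivative `y ↦ ⟨gradF z, y⟩`. -/
def HasGradientOnBox {n : ℕ} (F : (Fin n → ℝ) → ℝ) (gradF : (Fin n → ℝ) → Fin n → ℝ) : Prop :=
  ∀ z ∈ Set.Icc (0 : Fin n → ℝ) 1, HasFDerivWithinAt F (gradCLM (gradF z)) (Set.Icc 0 1) z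


/-!
Each Frank–Wolfe step is a convex combination putting weight `fwRatio T j ≤ 1` on the current
point, so the iterates stay in `P` and each gap `1 - x_i` shrinks at most by that factor; the
factors telescope to `e^{-t_j/(1+t_j)} = H_T / (H_T + H_j)`. For the second bound,
DR-submodularity makes `s ↦ F (y + s • (x ⊔ y - y))` have antitone increments on `[0, 1/‖x‖]`,
where this ray stays in the box, and `F ≥ 0` at its far end gives `(1 - ‖x‖) F y ≤ F (x ⊔ y)`.
-/

open Real

lemma harmonicNum_nonneg (j : ℕ) : 0 ≤ harmonicNum j :=
  Finset.sum_nonneg fun _ _ => by positivity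

lemma harmonicNum_mono : Monotone harmonicNum := fun _ _ h =>
  Finset.sum_le_sum_of_subset_of_nonneg (Finset.range_subset_range.mpr h) fun _ _ _ => by
    positivity

lemma harmonicNum_div_mem_Icc {T j : ℕ} (hj : j ≤ T) :
    harmonicNum j / harmonicNum T ∈ Set.Icc 0 1 :=
  ⟨div_nonneg (harmonicNum_nonneg j) (harmonicNum_nonneg T),
    div_le_one_of_le₀ (harmonicNum_mono hj) (harmonicNum_nonneg T)⟩

lemma one_div_one_add_fwTime (T j : ℕ) :
    1 / (1 + fwTime T j) = 1 - log (1 + harmonicNum j / harmonicNum T) := by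
  rw [fwTime, add_sub_cancel, one_div_one_div]

lemma one_add_fwTime_pos {T j : ℕ} (hj : j ≤ T) : 0 < 1 + fwTime T j := by
  obtain ⟨h0, h1⟩ := harmonicNum_div_mem_Icc hj
  have hlog : log (1 + harmonicNum j / harmonicNum T) < 1 :=
    calc log (1 + harmonicNum j / harmonicNum T) ≤ log 2 :=
          log_le_log (by linarith) (by linarith)
      _ < 1 := by linarith [log_two_lt_d9]
  exact one_div_pos.mp (by rw [one_div_one_add_fwTime]; linarith)

lemma exp_neg_fwTime_div {T j : ℕ} (hj : j ≤ T) :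
    exp (-fwTime T j / (1 + fwTime T j)) = (1 + harmonicNum j / harmonicNum T)⁻¹ := by
  have hpos : 0 < 1 + harmonicNum j / harmonicNum T := by
    linarith [(harmonicNum_div_mem_Icc hj).1]
  have hne := (one_add_fwTime_pos hj).ne'
  have : -fwTime T j / (1 + fwTime T j) = 1 / (1 + fwTime T j) - 1 := by field_simp; ring
  rw [this, one_div_one_add_fwTime, sub_sub_cancel_left, exp_neg, exp_log hpos]

lemma fwRatio_eq {T j : ℕ} (hj : j < T) :
    fwRatio T j =
      (1 + harmonicNum j / harmonicNum T) / (1 + harmonicNum (j + 1) / harmonicNum T) := by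
  have hpos : ∀ k ≤ T, 0 < 1 + harmonicNum k / harmonicNum T := fun k hk => by
    linarith [(harmonicNum_div_mem_Icc hk).1]
  rw [fwRatio, one_div_one_add_fwTime, one_div_one_add_fwTime, neg_sub, sub_add_sub_cancel,
    exp_sub, exp_log (hpos _ hj.le), exp_log (hpos _ hj)]

lemma fwTime_zero (T : ℕ) : fwTime T 0 = 0 := by
  simp [fwTime, harmonicNum]

lemma exp_neg_fwTime_div_mem_Icc {T j : ℕ} (hj : j ≤ T) :
    exp (-fwTime T j / (1 + fwTime T j)) ∈ Set.Icc 0 1 := by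
  rw [exp_neg_fwTime_div hj]
  have := (harmonicNum_div_mem_Icc hj).1
  exact ⟨by positivity, inv_le_one_of_one_le₀ (by linarith)⟩

lemma fwRatio_mem_Icc {T j : ℕ} (hj : j < T) : fwRatio T j ∈ Set.Icc 0 1 := by
  rw [fwRatio_eq hj]
  have h0 := (harmonicNum_div_mem_Icc hj.le).1
  have hle : harmonicNum j / harmonicNum T ≤ harmonicNum (j + 1) / harmonicNum T :=
    div_le_div_of_nonneg_right (harmonicNum_mono j.le_succ) (harmonicNum_nonneg T)
  exact ⟨div_nonneg (by linarith) (by linarith), div_le_one_of_le₀ (by linarith) (by linarith)⟩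

lemma fwRatio_mul_exp_neg_fwTime_div {T j : ℕ} (hj : j < T) :
    fwRatio T j * exp (-fwTime T j / (1 + fwTime T j)) =
      exp (-fwTime T (j + 1) / (1 + fwTime T (j + 1))) := by
  have := (harmonicNum_div_mem_Icc hj.le).1
  rw [fwRatio_eq hj, exp_neg_fwTime_div hj.le, exp_neg_fwTime_div hj]
  field_simp

section ConvexIteration

variable {n T : ℕ} {x v : ℕ → Fin n → ℝ} {r : ℕ → ℝ}

lemma mem_of_convex_step {P : Set (Fin n → ℝ)} (hP : Convex ℝ P) (hx0 : x 0 ∈ P)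
    (hv : ∀ j < T, v j ∈ P) (hr : ∀ j < T, r j ∈ Set.Icc 0 1)
    (hstep : ∀ j < T, x (j + 1) = r j • x j + (1 - r j) • v j) :
    ∀ j ≤ T, x j ∈ P := by
  intro j hj
  induction j with
  | zero => exact hx0
  | succ j ih =>
    rw [hstep j hj]
    exact hP (ih (by omega)) (hv j hj) (hr j hj).1 (by linarith [(hr j hj).2]) (by ring)

lemma mul_one_sub_le_one_sub_of_step {w : ℕ → ℝ} (hw0 : w 0 = 1)
    (hw : ∀ j < T, w (j + 1) = r j * w j) (hr : ∀ j < T, r j ∈ Set.Icc 0 1)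
    (hv : ∀ j < T, v j ≤ 1) (hstep : ∀ j < T, x (j + 1) = r j • x j + (1 - r j) • v j) :
    ∀ j ≤ T, ∀ i, w j * (1 - x 0 i) ≤ 1 - x j i := by
  intro j hj i
  induction j with
  | zero => simp [hw0]
  | succ j ih =>
    obtain ⟨hr0, hr1⟩ := hr j hj
    have hvi : v j i ≤ 1 := hv j hj i
    have hxi : x (j + 1) i = r j * x j i + (1 - r j) * v j i := by simp [hstep j hj]
    calc w (j + 1) * (1 - x 0 i) = r j * (w j * (1 - x 0 i)) := by rw [hw j hj, mul_assoc]
      _ ≤ r j * (1 - x j i) := mul_le_mul_of_nonneg_left (ih (by omega)) hr0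
      _ ≤ 1 - x (j + 1) i := by rw [hxi]; nlinarith

end ConvexIteration

lemma norm_le_one_of_mem_Icc {n : ℕ} {x : Fin n → ℝ} (hx : x ∈ Set.Icc 0 1) : ‖x‖ ≤ 1 :=
  (pi_norm_le_iff_of_nonneg zero_le_one).mpr fun i => by
    rw [Real.norm_of_nonneg (hx.1 i)]; exact hx.2 i

lemma mul_one_sub_norm_le_one_sub_norm {n : ℕ} {x y : Fin n → ℝ} {w : ℝ} (hw : w ∈ Set.Icc 0 1)
    (hx : ‖x‖ ≤ 1) (hy : 0 ≤ y) (hxy : ∀ i, w * (1 - x i) ≤ 1 - y i) :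
    w * (1 - ‖x‖) ≤ 1 - ‖y‖ := by
  have hw1 : w * (1 - ‖x‖) ≤ 1 := by nlinarith [hw.1, hw.2, norm_nonneg x]
  rw [le_sub_comm, pi_norm_le_iff_of_nonneg (by linarith)]
  intro i
  rw [Real.norm_of_nonneg (hy i)]
  nlinarith [hxy i, hw.1, (Real.le_norm_self (x i)).trans (norm_le_pi_norm x i)]

lemma mul_sub_le_mul_sub_of_increments_antitone {f : ℕ → ℝ} {N K : ℕ} (hNK : N ≤ K)
    (hf : ∀ k l, k ≤ l → l < K → f (l + 1) - f l ≤ f (k + 1) - f k) :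
    N * (f K - f 0) ≤ K * (f N - f 0) := by
  induction K, hNK using Nat.le_induction with
  | base => exact le_rfl
  | succ K hNK ih =>
    have hmean : N * (f (K + 1) - f K) ≤ f N - f 0 := by
      rw [← Finset.sum_range_sub f N]
      simpa using Finset.card_nsmul_le_sum (Finset.range N) _ _ fun k hk =>
        hf k K (by simp at hk; omega) (lt_add_one K)
    have := ih fun k l hkl hl => hf k l hkl (by omega)
    push_cast
    linarith

section IncrementsAntitone

variable {g : ℝ → ℝ} {θ : ℝ}

/-- The chord bound on the grid `k / N`, `k ≤ K`, which stays in `[0, 1/θ]`. -/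
lemma sub_mul_le_mul_of_increments_antitone (hθ1 : θ ≤ 1)
    (hg : ∀ s, 0 ≤ s → s * θ ≤ 1 → 0 ≤ g s)
    (hinc : ∀ u v h, 0 ≤ u → u ≤ v → 0 ≤ h → (v + h) * θ ≤ 1 →
      g (v + h) - g v ≤ g (u + h) - g u)
    {N K : ℕ} (hN : 0 < N) (hKN : K * θ ≤ N) :
    (K - N : ℝ) * g 0 ≤ K * g 1 := by
  have hN' : (0 : ℝ) < N := by exact_mod_cast hN
  have hg0 : 0 ≤ g 0 := hg 0 le_rfl (by simp)
  rcases le_or_gt N K with hle | hlt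
  · have hchord := mul_sub_le_mul_sub_of_increments_antitone (f := fun k => g (k / N)) hle
      fun k l hkl hlK => by
        have hl : ((l : ℝ) + 1) * θ ≤ N := by
          have : ((l : ℝ) + 1) ≤ K := by exact_mod_cast hlK
          nlinarith
        have := hinc (k / N) (l / N) (1 / N) (by positivity) (by gcongr) (by positivity)
          (by rw [← add_div, div_mul_eq_mul_div, div_le_one hN']; exact hl)
        simpa [add_div] using this
    have hgK := hg (K / N) (by positivity) (by rw [div_mul_eq_mul_div, div_le_one hN']; exact hKN)
    simp only [Nat.cast_zero, zero_div, div_self hN'.ne'] at hchord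
    nlinarith
  · have : (K : ℝ) - N ≤ 0 := by
      have : (K : ℝ) < N := by exact_mod_cast hlt
      linarith
    nlinarith [mul_nonpos_of_nonpos_of_nonneg this hg0, hg 1 zero_le_one (by rwa [one_mul])]

open Filter Topology in
/-- Without continuity of `g`, the chord bound is reached through grids of mesh `1 / N` with
`N / K → θ`. -/
lemma one_sub_mul_le_of_increments_antitone (hθ0 : 0 ≤ θ) (hθ1 : θ ≤ 1)
    (hg : ∀ s, 0 ≤ s → s * θ ≤ 1 → 0 ≤ g s)
    (hinc : ∀ u v h, 0 ≤ u → u ≤ v → 0 ≤ h → (v + h) * θ ≤ 1 →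
      g (v + h) - g v ≤ g (u + h) - g u) :
    (1 - θ) * g 0 ≤ g 1 := by
  have hg0 : 0 ≤ g 0 := hg 0 le_rfl (by simp)
  have hbound : ∀ K : ℕ, 1 ≤ K → (1 - θ - 2 / K) * g 0 ≤ g 1 := by
    intro K hK
    have hK' : (0 : ℝ) < K := by exact_mod_cast hK
    have hceil := Nat.ceil_lt_add_one (mul_nonneg hK'.le hθ0)
    have := sub_mul_le_mul_of_increments_antitone hθ1 hg hinc (N := ⌈K * θ⌉₊ + 1) (K := K)
      (Nat.succ_pos _) (by push_cast; linarith [Nat.le_ceil ((K : ℝ) * θ)])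
    push_cast at this
    rw [show 1 - θ - 2 / (K : ℝ) = (K - (K * θ + 2)) / K by field_simp; ring,
      div_mul_eq_mul_div, div_le_iff₀ hK']
    nlinarith
  have hlim : Tendsto (fun K : ℕ => (1 - θ - 2 / (K : ℝ)) * g 0) atTop (𝓝 ((1 - θ) * g 0)) := by
    simpa using (tendsto_const_nhds.sub (tendsto_const_div_atTop_nhds_zero_nat (2 : ℝ))).mul_const
      (g 0)
  exact le_of_tendsto hlim ((eventually_ge_atTop 1).mono hbound)

end IncrementsAntitone

namespace DRSubmodular

variable {n : ℕ} {F : (Fin n → ℝ) → ℝ}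

lemma sub_le_sub_of_le (hDR : DRSubmodular F) {p q d : Fin n → ℝ} (hp : 0 ≤ p) (hpq : p ≤ q)
    (hd : 0 ≤ d) (hqd : q + d ≤ 1) :
    F (q + d) - F q ≤ F (p + d) - F p := by
  classical
  -- `d` is added one coordinate at a time: `D s` is its restriction to the coordinates in `s`.
  set D : Finset (Fin n) → Fin n → ℝ := fun s => ∑ i ∈ s, Pi.single i (d i) with hD
  have hD_nonneg : ∀ s, 0 ≤ D s := fun s =>
    Finset.sum_nonneg fun i _ => Pi.single_nonneg.mpr (hd i)
  have hD_le : ∀ s, D s ≤ d := fun s => by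
    conv_rhs => rw [← Finset.univ_sum_single d]
    exact Finset.sum_le_sum_of_subset_of_nonneg (Finset.subset_univ s)
      fun i _ _ => Pi.single_nonneg.mpr (hd i)
  have hmem : ∀ z w : Fin n → ℝ, p ≤ z → z ≤ q → 0 ≤ w → w ≤ d → z + w ∈ Set.Icc 0 1 :=
    fun z w hpz hzq hw hwd =>
      ⟨add_nonneg (hp.trans hpz) hw, (add_le_add hzq hwd).trans hqd⟩
  suffices ∀ s, F (q + D s) - F q ≤ F (p + D s) - F p by
    simpa [hD, Finset.univ_sum_single] using this Finset.univ
  intro s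
  induction s using Finset.induction_on with
  | empty => simp [hD]
  | insert i s hi ih =>
    have hins : D (insert i s) = D s + d i • Pi.single i 1 := by
      simp only [hD]
      rw [Finset.sum_insert hi, add_comm, ← Pi.single_smul, smul_eq_mul, mul_one]
    rcases (hd i).eq_or_lt with h0 | hpos
    · rwa [hins, ← h0, Pi.zero_apply, zero_smul, add_zero]
    · have hstep := hDR (p + D s) (q + D s) (hmem _ _ le_rfl hpq (hD_nonneg s) (hD_le s))
        (hmem _ _ hpq le_rfl (hD_nonneg s) (hD_le s)) (add_le_add hpq le_rfl) i (d i) hpos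
        (by rw [add_assoc, ← hins]; exact hmem _ _ le_rfl hpq (hD_nonneg _) (hD_le _))
        (by rw [add_assoc, ← hins]; exact hmem _ _ hpq le_rfl (hD_nonneg _) (hD_le _))
      rw [hins, ← add_assoc, ← add_assoc]
      linarith

lemma one_sub_norm_mul_le_apply_sup (hF : ∀ z ∈ Set.Icc (0 : Fin n → ℝ) 1, 0 ≤ F z)
    (hDR : DRSubmodular F) {x y : Fin n → ℝ} (hx : x ∈ Set.Icc 0 1) (hy : y ∈ Set.Icc 0 1) :
    (1 - ‖x‖) * F y ≤ F (x ⊔ y) := by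
  set d := x ⊔ y - y with hd
  have hd0 : 0 ≤ d := sub_nonneg.mpr le_sup_right
  have hdθ : ∀ i, d i ≤ ‖x‖ * (1 - y i) := fun i => by
    have hx0 : 0 ≤ x i := hx.1 i
    have hx1 : x i ≤ 1 := hx.2 i
    have hy0 : 0 ≤ y i := hy.1 i
    have hy1 : y i ≤ 1 := hy.2 i
    have hsup : x i ⊔ y i ≤ y i + x i * (1 - y i) :=
      sup_le (by nlinarith [mul_nonneg hy0 (sub_nonneg.mpr hx1)]) (by nlinarith)
    calc d i = x i ⊔ y i - y i := rfl
      _ ≤ x i * (1 - y i) := by linarith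
      _ ≤ ‖x‖ * (1 - y i) := mul_le_mul_of_nonneg_right
          ((Real.le_norm_self _).trans (norm_le_pi_norm x i)) (by linarith)
  have hray : ∀ s : ℝ, 0 ≤ s → s * ‖x‖ ≤ 1 → y + s • d ≤ 1 := fun s hs hsθ i => by
    have h1 : y i ≤ 1 := hy.2 i
    have := mul_le_mul_of_nonneg_left (hdθ i) hs
    have := mul_le_mul_of_nonneg_right hsθ (sub_nonneg.mpr h1)
    simp only [Pi.add_apply, Pi.smul_apply, smul_eq_mul, Pi.one_apply]
    nlinarith
  have hray0 : ∀ s : ℝ, 0 ≤ s → 0 ≤ y + s • d := fun s hs => add_nonneg hy.1 (smul_nonneg hs hd0)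
  have key := one_sub_mul_le_of_increments_antitone (g := fun s => F (y + s • d)) (norm_nonneg x)
    (norm_le_one_of_mem_Icc hx) (fun s hs hsθ => hF _ ⟨hray0 s hs, hray s hs hsθ⟩)
    fun u v h hu huv hh hvh => by
      have := hDR.sub_le_sub_of_le (hray0 u hu)
        (add_le_add_right (smul_le_smul_of_nonneg_right huv hd0) y) (smul_nonneg hh hd0)
        (by rw [add_assoc, ← add_smul]; exact hray _ (by linarith) hvh)
      simpa only [add_assoc, ← add_smul] using this
  simpa [hd] using key

end DRSubmodular

theorem fw_general_start_bounds_general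
    (n : ℕ) (F : (Fin n → ℝ) → ℝ)
    (hFnonneg : ∀ z ∈ Set.Icc (0 : Fin n → ℝ) 1, 0 ≤ F z)
    (hDR : DRSubmodular F)
    (P : Set (Fin n → ℝ)) (hPsub : P ⊆ Set.Icc 0 1) (hPconv : Convex ℝ P)
    (xstar : Fin n → ℝ) (hxstarP : xstar ∈ P)
    (T : ℕ)
    (x0 : Fin n → ℝ) (hx0P : x0 ∈ P)
    (x v : ℕ → Fin n → ℝ)
    (hx0 : x 0 = x0)
    (hvP : ∀ j < T, v j ∈ P)
    (hstep : ∀ j < T, x (j + 1) = fwRatio T j • x j + (1 - fwRatio T j) • v j) :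
    (∀ j ≤ T, ∀ i : Fin n,
        1 - x j i ≥ Real.exp (-(fwTime T j) / (1 + fwTime T j)) * (1 - x0 i)) ∧
    (∀ j ≤ T,
        F (x j ⊔ xstar) ≥
          Real.exp (-(fwTime T j) / (1 + fwTime T j)) * (1 - ‖x0‖) * F xstar) := by
  subst hx0
  have hr : ∀ j < T, fwRatio T j ∈ Set.Icc 0 1 := fun _ => fwRatio_mem_Icc
  have hxP := mem_of_convex_step hPconv hx0P hvP hr hstep
  have hgap := mul_one_sub_le_one_sub_of_step (w := fun j => exp (-fwTime T j / (1 + fwTime T j)))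
    (by simp [fwTime_zero]) (fun j hj => (fwRatio_mul_exp_neg_fwTime_div hj).symm) hr
    (fun j hj => (hPsub (hvP j hj)).2) hstep
  refine ⟨hgap, fun j hj => ?_⟩
  have hxj := hPsub (hxP j hj)
  calc exp (-fwTime T j / (1 + fwTime T j)) * (1 - ‖x 0‖) * F xstar
      ≤ (1 - ‖x j‖) * F xstar :=
        mul_le_mul_of_nonneg_right
          (mul_one_sub_norm_le_one_sub_norm (exp_neg_fwTime_div_mem_Icc hj)
            (norm_le_one_of_mem_Icc (hPsub hx0P)) hxj.1 (hgap j hj))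
          (hFnonneg _ (hPsub hxstarP))
    _ ≤ F (x j ⊔ xstar) := hDR.one_sub_norm_mul_le_apply_sup hFnonneg hxj (hPsub hxstarP)

/-- If the initialization is replaced by an arbitrary
`x₀ ∈ argmin_{x ∈ P} ‖x‖_∞` (dropping `0 ∈ P` and `F(0) = 0`), then
`1 - x_i(t_j) ≥ e^{-t_j/(1+t_j)} (1 - x_i(t_0))` for all `i` and `j ≤ T`, and consequently
`F(x(t_j) ∨ x*) ≥ e^{-t_j/(1+t_j)} (1 - ‖x₀‖_∞) F(x*)`.  (On `Fin n → ℝ` the default norm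
`‖·‖` is the sup norm `max_i |x_i|`.) -/
theorem fw_general_start_bounds
    (n : ℕ) (F : (Fin n → ℝ) → ℝ)
    (hFnonneg : ∀ z ∈ Set.Icc (0 : Fin n → ℝ) 1, 0 ≤ F z)
    (hDR : DRSubmodular F)
    (P : Set (Fin n → ℝ)) (hPsub : P ⊆ Set.Icc 0 1) (hPconv : Convex ℝ P)
    (xstar : Fin n → ℝ) (hxstarP : xstar ∈ P) (hxstarMax : ∀ z ∈ P, F z ≤ F xstar)
    (T : ℕ) (hT : 1 ≤ T)
    (x0 : Fin n → ℝ) (hx0P : x0 ∈ P) (hx0min : ∀ z ∈ P, ‖x0‖ ≤ ‖z‖)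
    (x v : ℕ → Fin n → ℝ)
    (hx0 : x 0 = x0)
    (hvP : ∀ j < T, v j ∈ P)
    (hstep : ∀ j < T, x (j + 1) = fwRatio T j • x j + (1 - fwRatio T j) • v j) :
    (∀ j ≤ T, ∀ i : Fin n,
        1 - x j i ≥ Real.exp (-(fwTime T j) / (1 + fwTime T j)) * (1 - x0 i)) ∧
    (∀ j ≤ T,
        F (x j ⊔ xstar) ≥
          Real.exp (-(fwTime T j) / (1 + fwTime T j)) * (1 - ‖x0‖) * F xstar) :=
  fw_general_start_bounds_general n F hFnonneg hDR P hPsub hPconv xstar hxstarP T x0 hx0P x v hx0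
    hvP hstep
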